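/- For a graph G of order n, a parameter α ∈ [0,1], and 1 ≤ k ≤ n, the k-th largest eigenvalue of A_α(G) = αD(G) + (1−α)A(G) is at most d(v_k), the k-th largest vertex degree of G. In particular, the largest eigenvalue of A_α(G) is at most the maximum degree Δ(G). -/

import Mathlib

/-!
Since `D(G) - A_α(G) = (1 - α) L(G)` and the Laplacian `L(G)` is positive semidefinite,
`A_α(G) ≤ D(G)` in the Loewner order whenever `α ≤ 1`. The Loewner order is inherited by every
sorted eigenvalue: the span of the top `i + 1` eigenvectors of `T` and the span of the bottom
`n - i` eigenvectors of `S` meet nontrivially, and a common unit vector `x` gives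
`λᵢ(T) ≤ ⟪T x, x⟫ ≤ ⟪S x, x⟫ ≤ λᵢ(S)`. Finally, the eigenvalues of the diagonal matrix `D(G)` are
the degrees.
-/

/-- The `A_α`-matrix of a graph: `α·D(G) + (1-α)·A(G)`. -/
noncomputable def Aalpha {n : ℕ} (α : ℝ) (G : SimpleGraph (Fin n)) [DecidableRel G.Adj] :
    Matrix (Fin n) (Fin n) ℝ :=
  α • Matrix.diagonal (fun v => (G.degree v : ℝ)) + (1 - α) • G.adjMatrix ℝ

lemma Aalpha_isHermitian {n : ℕ} (α : ℝ) (G : SimpleGraph (Fin n)) [DecidableRel G.Adj] :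
    (Aalpha α G).IsHermitian := by
  apply Matrix.IsHermitian.ext
  intro i j
  by_cases h : G.Adj i j <;> by_cases hij : i = j <;>
    simp_all [Aalpha, Matrix.diagonal_apply, SimpleGraph.adj_comm, eq_comm]

/-- The `k`-th largest eigenvalue (1-indexed) of a Hermitian matrix. -/
noncomputable def eigDesc {n : ℕ} {M : Matrix (Fin n) (Fin n) ℝ} (hM : M.IsHermitian)
    (k : ℕ) : ℝ :=
  ((Finset.univ.val.map hM.eigenvalues).sort (· ≤ ·)).getD (n - k) 0

/-- The `k`-th largest vertex degree (1-indexed) of `G`. -/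
noncomputable def degDesc {n : ℕ} (G : SimpleGraph (Fin n)) [DecidableRel G.Adj] (k : ℕ) : ℝ :=
  ((Finset.univ.val.map (fun v => (G.degree v : ℝ))).sort (· ≤ ·)).getD (n - k) 0

open Finset Module Submodule RCLike

namespace OrthonormalBasis

variable {𝕜 E ι : Type*} [RCLike 𝕜] [NormedAddCommGroup E] [InnerProductSpace 𝕜 E] [Fintype ι]
  (b : OrthonormalBasis ι 𝕜 E)

lemma finrank_span_image (s : Finset ι) : finrank 𝕜 (span 𝕜 (b '' s)) = #s := by
  have hb : LinearIndependent 𝕜 fun j : (s : Set ι) => b j :=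
    b.orthonormal.linearIndependent.comp _ Subtype.val_injective
  rw [Set.image_eq_range, finrank_span_eq_card hb]
  simp

lemma repr_eq_zero_of_mem_span_image {s : Set ι} {x : E} (hx : x ∈ span 𝕜 (b '' s)) {j : ι}
    (hj : j ∉ s) : b.repr x j = 0 := by
  rw [← b.coe_toBasis, Basis.mem_span_image] at hx
  rw [← b.coe_toBasis_repr_apply]
  exact Finsupp.notMem_support_iff.mp fun h => hj (hx h)

lemma norm_sq_eq_sum_repr (x : E) : ‖x‖ ^ 2 = ∑ i, ‖b.repr x i‖ ^ 2 := by
  rw [← b.repr.norm_map, EuclideanSpace.norm_sq_eq]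

lemma re_inner_map_self_eq_sum {T : E →ₗ[𝕜] E} {μ : ι → ℝ} (hT : ∀ i, T (b i) = (μ i : 𝕜) • b i)
    (x : E) : re (inner 𝕜 (T x) x) = ∑ i, μ i * ‖b.repr x i‖ ^ 2 := by
  classical
  have hrepr : ∀ i, b.repr (T x) i = (μ i : 𝕜) • b.repr x i := by
    intro i
    conv_lhs => rw [← b.sum_repr x]
    simp [hT, b.repr_self, smul_smul, Pi.single_apply, mul_comm]
  rw [← b.repr.inner_map_map, PiLp.inner_apply, map_sum]
  refine sum_congr rfl fun i _ => ?_
  rw [hrepr, inner_smul_left, conj_ofReal, inner_self_eq_norm_sq_to_K, ← ofReal_pow,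
    ← ofReal_mul, ofReal_re]

variable {b} {T : E →ₗ[𝕜] E} {μ : ι → ℝ} {s : Set ι} {x : E}

lemma mul_norm_sq_le_re_inner_of_mem_span (hT : ∀ i, T (b i) = (μ i : 𝕜) • b i)
    (hx : x ∈ span 𝕜 (b '' s)) {a : ℝ} (ha : ∀ i ∈ s, a ≤ μ i) :
    a * ‖x‖ ^ 2 ≤ re (inner 𝕜 (T x) x) := by
  rw [b.re_inner_map_self_eq_sum hT, b.norm_sq_eq_sum_repr, mul_sum]
  refine sum_le_sum fun i _ => ?_
  by_cases hi : i ∈ s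
  · exact mul_le_mul_of_nonneg_right (ha i hi) (by positivity)
  · simp [b.repr_eq_zero_of_mem_span_image hx hi]

lemma re_inner_le_mul_norm_sq_of_mem_span (hT : ∀ i, T (b i) = (μ i : 𝕜) • b i)
    (hx : x ∈ span 𝕜 (b '' s)) {a : ℝ} (ha : ∀ i ∈ s, μ i ≤ a) :
    re (inner 𝕜 (T x) x) ≤ a * ‖x‖ ^ 2 := by
  rw [b.re_inner_map_self_eq_sum hT, b.norm_sq_eq_sum_repr, mul_sum]
  refine sum_le_sum fun i _ => ?_
  by_cases hi : i ∈ s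
  · exact mul_le_mul_of_nonneg_right (ha i hi) (by positivity)
  · simp [b.repr_eq_zero_of_mem_span_image hx hi]

end OrthonormalBasis

namespace LinearMap.IsSymmetric

variable {𝕜 E : Type*} [RCLike 𝕜] [NormedAddCommGroup E] [InnerProductSpace 𝕜 E]
  [FiniteDimensional 𝕜 E] {n : ℕ} (hn : finrank 𝕜 E = n)

theorem eigenvalues_le_of_isPositive_sub {T S : E →ₗ[𝕜] E} (hT : T.IsSymmetric)
    (hS : S.IsSymmetric) (hST : (S - T).IsPositive) (i : Fin n) :
    hT.eigenvalues hn i ≤ hS.eigenvalues hn i := by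
  set U := span 𝕜 (hT.eigenvectorBasis hn '' (Finset.Iic i : Finset (Fin n)))
  set V := span 𝕜 (hS.eigenvectorBasis hn '' (Finset.Ici i : Finset (Fin n)))
  have hUV : U ⊓ V ≠ ⊥ := by
    intro hbot
    have hsum := Submodule.finrank_sup_add_finrank_inf_eq U V
    rw [hbot, finrank_bot, OrthonormalBasis.finrank_span_image,
      OrthonormalBasis.finrank_span_image, Fin.card_Iic, Fin.card_Ici] at hsum
    have := (U ⊔ V).finrank_le
    omega
  obtain ⟨x, hx, hx0⟩ := Submodule.exists_mem_ne_zero_of_ne_bot hUV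
  have hTx : hT.eigenvalues hn i * ‖x‖ ^ 2 ≤ re (inner 𝕜 (T x) x) :=
    OrthonormalBasis.mul_norm_sq_le_re_inner_of_mem_span (hT.apply_eigenvectorBasis hn)
      (Submodule.mem_inf.mp hx).1 fun j hj => hT.eigenvalues_antitone hn (by simpa using hj)
  have hSx : re (inner 𝕜 (S x) x) ≤ hS.eigenvalues hn i * ‖x‖ ^ 2 :=
    OrthonormalBasis.re_inner_le_mul_norm_sq_of_mem_span (hS.apply_eigenvectorBasis hn)
      (Submodule.mem_inf.mp hx).2 fun j hj => hS.eigenvalues_antitone hn (by simpa using hj)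
  have hTS : re (inner 𝕜 (T x) x) ≤ re (inner 𝕜 (S x) x) := by
    simpa [inner_sub_left] using hST.re_inner_nonneg_left x
  exact le_of_mul_le_mul_right (hTx.trans (hTS.trans hSx)) (by positivity)

end LinearMap.IsSymmetric

namespace Matrix.IsHermitian

open scoped ComplexOrder

variable {𝕜 n : Type*} [RCLike 𝕜] [Fintype n] [DecidableEq n] {A B : Matrix n n 𝕜}

theorem eigenvalues₀_le_of_posSemidef_sub (hA : A.IsHermitian) (hB : B.IsHermitian)
    (hAB : (B - A).PosSemidef) (i : Fin (Fintype.card n)) :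
    hA.eigenvalues₀ i ≤ hB.eigenvalues₀ i :=
  LinearMap.IsSymmetric.eigenvalues_le_of_isPositive_sub _ _ _
    (by rwa [← map_sub, isPositive_toEuclideanLin_iff]) i

lemma map_univ_eigenvalues (hA : A.IsHermitian) :
    univ.val.map hA.eigenvalues = univ.val.map hA.eigenvalues₀ := by
  rw [← Multiset.map_univ_val_equiv (Fintype.equivOfCardEq (Fintype.card_fin _)).symm,
    Multiset.map_map]
  rfl

lemma map_univ_eigenvalues_diagonal (d : n → ℝ) :
    univ.val.map (isHermitian_diagonal d).eigenvalues = univ.val.map d := by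
  have hroots := Polynomial.roots_multiset_prod_X_sub_C (univ.val.map d)
  rw [Multiset.map_map, Function.comp_def, ← Finset.prod_eq_multiset_prod] at hroots
  have := (isHermitian_diagonal d).roots_charpoly_eq_eigenvalues
  rw [charpoly_diagonal, Function.comp_def, hroots] at this
  simpa using this.symm

end Matrix.IsHermitian

theorem Antitone.getD_sort_map_univ {α : Type*} [LinearOrder α] {m : ℕ} {f : Fin m → α}
    (hf : Antitone f) (d : α) {k : ℕ} (hk : 1 ≤ k) (hkm : k ≤ m) :
    ((univ.val.map f).sort (· ≤ ·)).getD (m - k) d = f ⟨k - 1, by omega⟩ := by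
  have hsort : (univ.val.map f).sort (· ≤ ·) = (List.ofFn f).reverse := by
    refine List.Perm.eq_of_pairwise' (Multiset.pairwise_sort _ _) ?_ ?_
    · exact List.pairwise_reverse.mpr hf.sortedGE_ofFn.pairwise
    · rw [← Multiset.coe_eq_coe, Multiset.sort_eq, Multiset.coe_reverse, Fin.univ_val_map]
  rw [hsort, List.getD_eq_getElem _ _ (by simp; omega), List.getElem_reverse, List.getElem_ofFn]
  congr 2
  simp
  omega

lemma eigDesc_eq_eigenvalues₀ {n : ℕ} {M : Matrix (Fin n) (Fin n) ℝ} (hM : M.IsHermitian)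
    {k : ℕ} (hk : 1 ≤ k) (hkn : k ≤ n) :
    eigDesc hM k = hM.eigenvalues₀ ⟨k - 1, by simp only [Fintype.card_fin]; omega⟩ := by
  rw [eigDesc, hM.map_univ_eigenvalues, show n - k = Fintype.card (Fin n) - k by simp]
  exact hM.eigenvalues₀_antitone.getD_sort_map_univ 0 hk (by simpa using hkn)

theorem eigDesc_le_of_posSemidef_sub {n : ℕ} {A B : Matrix (Fin n) (Fin n) ℝ}
    (hA : A.IsHermitian) (hB : B.IsHermitian) (hAB : (B - A).PosSemidef) {k : ℕ} (hk : 1 ≤ k)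
    (hkn : k ≤ n) : eigDesc hA k ≤ eigDesc hB k := by
  rw [eigDesc_eq_eigenvalues₀ hA hk hkn, eigDesc_eq_eigenvalues₀ hB hk hkn]
  exact hA.eigenvalues₀_le_of_posSemidef_sub hB hAB _

namespace SimpleGraph

variable {n : ℕ} (G : SimpleGraph (Fin n)) [DecidableRel G.Adj]

lemma degDesc_eq_eigDesc_degMatrix (k : ℕ) :
    degDesc G k = eigDesc (G.isHermitian_degMatrix (R := ℝ)) k := by
  rw [degDesc, eigDesc]
  exact congrArg (fun s : Multiset ℝ => (s.sort (· ≤ ·)).getD (n - k) 0)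
    (Matrix.IsHermitian.map_univ_eigenvalues_diagonal _).symm

lemma degDesc_le_maxDegree (k : ℕ) : degDesc G k ≤ G.maxDegree := by
  rw [degDesc, List.getD_eq_getElem?_getD]
  cases h : (((univ.val.map fun v => (G.degree v : ℝ))).sort (· ≤ ·))[n - k]? with
  | none => simp
  | some x =>
    obtain ⟨v, -, rfl⟩ := Multiset.mem_map.mp ((Multiset.mem_sort _).mp (List.mem_of_getElem? h))
    exact Nat.cast_le.mpr (G.degree_le_maxDegree v)

lemma degMatrix_sub_Aalpha (α : ℝ) : G.degMatrix ℝ - Aalpha α G = (1 - α) • G.lapMatrix ℝ := by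
  rw [Aalpha, lapMatrix, ← degMatrix]
  module

lemma posSemidef_degMatrix_sub_Aalpha {α : ℝ} (hα : α ≤ 1) :
    (G.degMatrix ℝ - Aalpha α G).PosSemidef := by
  rw [degMatrix_sub_Aalpha]
  exact (G.posSemidef_lapMatrix ℝ).smul (sub_nonneg.mpr hα)

end SimpleGraph

theorem Aalpha_eigenvalue_le_degree (n : ℕ) (G : SimpleGraph (Fin n)) [DecidableRel G.Adj]
    (α : ℝ) (hα1 : α ≤ 1) :
    (∀ k : ℕ, 1 ≤ k → k ≤ n → eigDesc (Aalpha_isHermitian α G) k ≤ degDesc G k) ∧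
    (1 ≤ n → eigDesc (Aalpha_isHermitian α G) 1 ≤ (G.maxDegree : ℝ)) := by
  have hle (k : ℕ) (hk : 1 ≤ k) (hkn : k ≤ n) :
      eigDesc (Aalpha_isHermitian α G) k ≤ degDesc G k := by
    rw [G.degDesc_eq_eigDesc_degMatrix]
    exact eigDesc_le_of_posSemidef_sub _ _ (G.posSemidef_degMatrix_sub_Aalpha hα1) hk hkn
  exact ⟨hle, fun hn => (hle 1 le_rfl hn).trans (G.degDesc_le_maxDegree 1)⟩
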